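/- Let p > 3 be prime and x = r/m with 0 < r < m integers, gcd(m,p) = 1. Then ∑_{k=1}^{p-1} ((x)_k(1-x)_k/((1)_k)^2)·(1/k)·∑_{j=0}^{k-1}(1/(x+j) + 1/(1-x+j)) ≡ ∑_{k=1}^{p-1} ((x)_k(1-x)_k/((1)_k)^2)·(2H_k(1)/k) (mod p). -/

import Mathlib

def pcong (p k : ℕ) (a b : ℚ) : Prop := ∃ c : ℚ, ¬ p ∣ c.den ∧ a - b = (p : ℚ) ^ k * c

/-!
Write `c_k = (x)_k (1-x)_k / k!²` and `S_k = ∑_{j<k} (1/(x+j) + 1/(1-x+j))`. For non-integral `x`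
one has the exact identity `c_n S_n = ∑_{j<n} c_j / (n-j)`, by induction on `n` from
`(x+n)(1-x+n) - (x+j)(1-x+j) = (n-j)(n+j+1)`. Dividing by `n` and summing gives
`∑_{k≤n} c_k (S_k - 2H_k)/k = ∑_{k≤n} 1/k² - ∑_{k≤n} (H_k + H_n - H_{n-k}) c_k/k`.
For `n = p - 1` the harmonic combination is `p ∑_{i≤k} 1/(i(p-i))`, the `c_k` with `k < p` are
`p`-integral, and `∑_{k<p} 1/k² ≡ ∑_{k<p} k² ≡ 0 (mod p)` for `p > 3`; so the right-hand side is
`p` times a `p`-integral number.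
-/

open Finset
open scoped Nat

section Hypergeometric

variable {K : Type*} [Field K]

noncomputable def hypergeomCoeff (x : K) (k : ℕ) : K :=
  (ascPochhammer K k).eval x * (ascPochhammer K k).eval (1 - x) / (ascPochhammer K k).eval 1 ^ 2

def recipSum (x : K) (k : ℕ) : K :=
  ∑ j ∈ range k, (1 / (x + j) + 1 / (1 - x + j))

@[simp]
lemma hypergeomCoeff_zero (x : K) : hypergeomCoeff x 0 = 1 := by
  simp [hypergeomCoeff]

lemma hypergeomCoeff_succ (x : K) (k : ℕ) :
    hypergeomCoeff x (k + 1) = hypergeomCoeff x k * ((x + k) * (1 - x + k) / (k + 1) ^ 2) := by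
  simp only [hypergeomCoeff, ascPochhammer_succ_eval]
  rw [mul_mul_mul_comm, mul_pow, ← div_mul_div_comm, add_comm 1 (k : K)]

variable [CharZero K]

lemma hypergeomCoeff_mul_recipSum {x : K} (hx : ∀ n : ℕ, (x + n) * (1 - x + n) ≠ 0) (n : ℕ) :
    hypergeomCoeff x n * recipSum x n = ∑ j ∈ range n, hypergeomCoeff x j / (n - j) := by
  induction n with
  | zero => simp [recipSum]
  | succ n ih =>
    have hn : (n + 1 : K) ≠ 0 := by exact_mod_cast n.succ_ne_zero
    have hxn := hx n
    have hstep : hypergeomCoeff x (n + 1) * recipSum x (n + 1)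
        = (x + n) * (1 - x + n) / (n + 1) ^ 2 * (hypergeomCoeff x n * recipSum x n)
          + (2 * n + 1) * hypergeomCoeff x n / (n + 1) ^ 2 := by
      have ha : x + n ≠ 0 := left_ne_zero_of_mul hxn
      have hb : 1 - x + n ≠ 0 := right_ne_zero_of_mul hxn
      rw [hypergeomCoeff_succ, recipSum, sum_range_succ, ← recipSum]
      field_simp
      ring
    have hshift : ∀ j ∈ range n,
        (x + n) * (1 - x + n) / (n + 1) ^ 2 * (hypergeomCoeff x j / (n - j))
          = ((n + 1 + j) * hypergeomCoeff x j
              + (j + 1) ^ 2 * hypergeomCoeff x (j + 1) / (n - j)) / (n + 1) ^ 2 := by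
      intro j hj
      have hnj : (n - j : K) ≠ 0 := sub_ne_zero.2 (by exact_mod_cast (mem_range.1 hj).ne')
      have hj1 : (j + 1 : K) ≠ 0 := by exact_mod_cast j.succ_ne_zero
      rw [hypergeomCoeff_succ]
      field_simp
      ring
    have hsplit : ∀ j ∈ range (n + 1), hypergeomCoeff x j / ((n + 1 : ℕ) - j)
        = ((n + 1 + j) * hypergeomCoeff x j
            + j ^ 2 * hypergeomCoeff x j / (n + 1 - j)) / (n + 1) ^ 2 := by
      intro j hj
      have hnj : (n + 1 - j : K) ≠ 0 := by
        rw [← Nat.cast_succ]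
        exact sub_ne_zero.2 (by exact_mod_cast (mem_range.1 hj).ne')
      push_cast
      field_simp
      ring
    rw [hstep, ih, mul_sum, sum_congr rfl hshift, sum_congr rfl hsplit, ← sum_div, ← sum_div,
      sum_add_distrib, sum_add_distrib,
      sum_range_succ (fun j => (n + 1 + (j : K)) * hypergeomCoeff x j),
      sum_range_succ' (fun j => (j : K) ^ 2 * hypergeomCoeff x j / (n + 1 - j))]
    push_cast
    simp only [add_sub_add_right_eq_sub]
    ring

end Hypergeometric

lemma Finset.sum_Icc_one_eq_sum_range {M : Type*} [AddCommMonoid M] (f : ℕ → M) (n : ℕ) :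
    ∑ k ∈ Icc 1 n, f k = ∑ k ∈ range n, f (k + 1) := by
  rw [range_eq_Ico, sum_Ico_add' f 0 n 1, Ico_add_one_right_eq_Icc, zero_add]

lemma harmonic_sub_harmonic_sub {n k : ℕ} (hk : k ≤ n) :
    harmonic n - harmonic (n - k) = ∑ i ∈ range k, 1 / ((n : ℚ) - i) := by
  induction k with
  | zero => simp
  | succ k ih =>
    have hnk : n - k = n - (k + 1) + 1 := by omega
    rw [sum_range_succ, ← ih (by omega), hnk, harmonic_succ, ← hnk]
    push_cast [Nat.cast_sub (by omega : k ≤ n)]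
    ring

lemma harmonic_add_harmonic_sub_harmonic_sub {n k : ℕ} (hk : k ≤ n) :
    harmonic k + harmonic n - harmonic (n - k)
      = (n + 1) * ∑ i ∈ range k, ((((i + 1) * (n - i) : ℕ) : ℚ))⁻¹ := by
  rw [add_sub_assoc, harmonic_sub_harmonic_sub hk, harmonic, ← sum_add_distrib, mul_sum]
  refine sum_congr rfl fun i hi => ?_
  have hin : i < n := (mem_range.1 hi).trans_le hk
  have hni : (n : ℚ) - i ≠ 0 := sub_ne_zero.2 (by exact_mod_cast hin.ne')
  push_cast [Nat.cast_sub hin.le]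
  field_simp
  ring

section HarmonicIdentity

variable {x : ℚ}

lemma hypergeomCoeff_mul_recipSum_div_succ (hx : ∀ n : ℕ, (x + n) * (1 - x + n) ≠ 0) (n : ℕ) :
    hypergeomCoeff x (n + 1) * recipSum x (n + 1) / (n + 1)
      = 1 / ((n : ℚ) + 1) ^ 2
        + ∑ k ∈ Icc 1 n, (1 / ((n : ℚ) + 1 - k) - 1 / (n + 1)) * hypergeomCoeff x k / k := by
  rw [hypergeomCoeff_mul_recipSum hx, sum_range_succ', sum_Icc_one_eq_sum_range, add_div, sum_div,
    add_comm]
  push_cast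
  congr 1
  · simp only [hypergeomCoeff_zero, sub_zero]
    field_simp
  · refine sum_congr rfl fun j hj => ?_
    have hjn : (j : ℚ) + 1 ≤ n := by exact_mod_cast mem_range.1 hj
    have hn1 : (n : ℚ) + 1 - (j + 1) ≠ 0 := by linarith
    have hn : (n : ℚ) + 1 ≠ 0 := by positivity
    have hj : (j : ℚ) + 1 ≠ 0 := by positivity
    field_simp
    ring

lemma sum_hypergeomCoeff_mul_recipSum_div (hx : ∀ n : ℕ, (x + n) * (1 - x + n) ≠ 0) (n : ℕ) :
    ∑ k ∈ Icc 1 n, hypergeomCoeff x k * recipSum x k / k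
      = ∑ k ∈ Icc 1 n, 1 / (k : ℚ) ^ 2
        + ∑ k ∈ Icc 1 n, (harmonic k + harmonic (n - k) - harmonic n) * hypergeomCoeff x k / k := by
  induction n with
  | zero => simp
  | succ n ih =>
    have hH : ∀ k ∈ Icc 1 n, (harmonic k + harmonic (n + 1 - k) - harmonic (n + 1))
          * hypergeomCoeff x k / k
        = (harmonic k + harmonic (n - k) - harmonic n) * hypergeomCoeff x k / k
          + (1 / ((n : ℚ) + 1 - k) - 1 / (n + 1)) * hypergeomCoeff x k / k := by
      intro k hk
      have hkn : k ≤ n := (mem_Icc.1 hk).2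
      rw [Nat.sub_add_comm hkn, harmonic_succ, harmonic_succ]
      push_cast [Nat.cast_sub hkn]
      ring
    simp only [sum_Icc_succ_top (Nat.le_add_left 1 n), ih, sum_congr rfl hH, sum_add_distrib,
      Nat.sub_self, harmonic_zero]
    push_cast
    rw [hypergeomCoeff_mul_recipSum_div_succ hx]
    ring

lemma sum_hypergeomCoeff_sub_two_harmonic (hx : ∀ n : ℕ, (x + n) * (1 - x + n) ≠ 0) (n : ℕ) :
    ∑ k ∈ Icc 1 n, hypergeomCoeff x k * (1 / k) * recipSum x k
        - ∑ k ∈ Icc 1 n, hypergeomCoeff x k * (2 * harmonic k / k)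
      = ∑ k ∈ Icc 1 n, 1 / (k : ℚ) ^ 2
        - (n + 1) * ∑ k ∈ Icc 1 n,
            (∑ i ∈ range k, ((((i + 1) * (n - i) : ℕ) : ℚ))⁻¹) * hypergeomCoeff x k / k := by
  have hreflect : ∀ k ∈ Icc 1 n, (n + 1) * ((∑ i ∈ range k, ((((i + 1) * (n - i) : ℕ) : ℚ))⁻¹)
        * hypergeomCoeff x k / k)
      = (harmonic k + harmonic n - harmonic (n - k)) * hypergeomCoeff x k / k := by
    intro k hk
    rw [harmonic_add_harmonic_sub_harmonic_sub (mem_Icc.1 hk).2]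
    ring
  have hdiv : ∑ k ∈ Icc 1 n, hypergeomCoeff x k * (1 / k) * recipSum x k
      = ∑ k ∈ Icc 1 n, hypergeomCoeff x k * recipSum x k / k :=
    sum_congr rfl fun k _ => by ring
  rw [mul_sum, sum_congr rfl hreflect, hdiv, sum_hypergeomCoeff_mul_recipSum_div hx, add_sub_assoc,
    ← sum_sub_distrib, sub_eq_add_neg, ← sum_neg_distrib]
  congr 1
  exact sum_congr rfl fun k _ => by ring

end HarmonicIdentity

section Padic

variable {p : ℕ} [Fact p.Prime]

lemma Rat.mem_padicValuation_integer_iff {q : ℚ} :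
    q ∈ (Rat.padicValuation p).integer ↔ ¬ p ∣ q.den :=
  Rat.padicValuation_le_one_iff

lemma Rat.inv_natCast_mem_padicValuation_integer {n : ℕ} (hn : ¬ p ∣ n) :
    (n : ℚ)⁻¹ ∈ (Rat.padicValuation p).integer := by
  have hn0 : 0 < n := Nat.pos_of_ne_zero fun h => hn (h ▸ dvd_zero p)
  rwa [Rat.mem_padicValuation_integer_iff, Rat.inv_natCast_den_of_pos hn0]

lemma pcong_one_of_sub_div_mem {a b : ℚ} (h : (a - b) / p ∈ (Rat.padicValuation p).integer) :
    pcong p 1 a b := by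
  have hp : (p : ℚ) ≠ 0 := by exact_mod_cast (Fact.out : p.Prime).ne_zero
  exact ⟨(a - b) / p, Rat.mem_padicValuation_integer_iff.1 h, by rw [pow_one, mul_div_cancel₀ _ hp]⟩

lemma hypergeomCoeff_mem_padicValuation_integer {x : ℚ} (hx : x ∈ (Rat.padicValuation p).integer)
    {k : ℕ} (hk : k < p) : hypergeomCoeff x k ∈ (Rat.padicValuation p).integer := by
  induction k with
  | zero => simp
  | succ k ih =>
    have hkp : ¬ p ∣ (k + 1) ^ 2 := fun h =>
      Nat.not_dvd_of_pos_of_lt k.succ_pos hk ((Fact.out : p.Prime).dvd_of_dvd_pow h)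
    rw [hypergeomCoeff_succ, div_eq_mul_inv]
    refine mul_mem (ih (by omega)) (mul_mem (mul_mem ?_ ?_) ?_)
    · exact add_mem hx (natCast_mem _ k)
    · exact add_mem (sub_mem (one_mem _) hx) (natCast_mem _ k)
    · exact_mod_cast Rat.inv_natCast_mem_padicValuation_integer hkp

lemma ZMod.sum_range_natCast {M : Type*} [AddCommMonoid M] (n : ℕ) [NeZero n] (f : ZMod n → M) :
    ∑ k ∈ range n, f k = ∑ z, f z :=
  sum_nbij' (↑) ZMod.val (fun _ _ => mem_univ _) (fun z _ => mem_range.2 z.val_lt)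
    (fun _ hk => ZMod.val_cast_of_lt (mem_range.1 hk)) (fun z _ => ZMod.natCast_zmod_val z)
    (fun _ _ => rfl)

lemma ZMod.sum_Icc_inv_sq_eq_zero (hp3 : 3 < p) :
    ∑ k ∈ Icc 1 (p - 1), ((k : ZMod p) ^ 2)⁻¹ = 0 := by
  have hIcc : Icc 1 (p - 1) = Ico 1 p := by
    ext k
    simp only [mem_Icc, mem_Ico]
    omega
  calc ∑ k ∈ Icc 1 (p - 1), ((k : ZMod p) ^ 2)⁻¹
      = ∑ k ∈ range p, ((k : ZMod p) ^ 2)⁻¹ := by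
        rw [hIcc, range_eq_Ico, sum_eq_sum_Ico_succ_bot (Fact.out : p.Prime).pos]
        simp
    _ = ∑ z : ZMod p, (z ^ 2)⁻¹ := ZMod.sum_range_natCast p fun z => (z ^ 2)⁻¹
    _ = ∑ z : ZMod p, z ^ 2 := by
        rw [← Equiv.sum_comp (Equiv.inv (ZMod p))]
        simp only [Equiv.inv_apply, inv_pow, inv_inv]
    _ = 0 := FiniteField.sum_pow_lt_card_sub_one (ZMod p) 2 (by rw [ZMod.card]; omega)

lemma prime_dvd_sum_sq_factorial_div (hp3 : 3 < p) :
    p ∣ ∑ k ∈ Icc 1 (p - 1), ((p - 1)! / k) ^ 2 := by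
  rw [← ZMod.natCast_eq_zero_iff, ← ZMod.sum_Icc_inv_sq_eq_zero hp3]
  push_cast
  refine sum_congr rfl fun k hk => eq_inv_of_mul_eq_one_left ?_
  obtain ⟨hk1, hkp⟩ := mem_Icc.1 hk
  rw [← mul_pow, ← Nat.cast_mul, Nat.div_mul_cancel (Nat.dvd_factorial hk1 hkp),
    ZMod.wilsons_lemma, neg_one_sq]

lemma sum_Icc_one_div_sq_eq (n : ℕ) :
    ∑ k ∈ Icc 1 n, 1 / (k : ℚ) ^ 2 = (∑ k ∈ Icc 1 n, (n ! / k) ^ 2 : ℕ) / (n ! : ℚ) ^ 2 := by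
  push_cast
  rw [sum_div]
  refine sum_congr rfl fun k hk => ?_
  obtain ⟨hk1, hkn⟩ := mem_Icc.1 hk
  have hk : (k : ℚ) ≠ 0 := by exact_mod_cast (by omega : k ≠ 0)
  rw [Nat.cast_div (Nat.dvd_factorial hk1 hkn) hk]
  field_simp [n.factorial_ne_zero]

lemma sum_Icc_one_div_sq_div_mem (hp3 : 3 < p) :
    (∑ k ∈ Icc 1 (p - 1), 1 / (k : ℚ) ^ 2) / (p : ℚ) ∈ (Rat.padicValuation p).integer := by
  have hp : p.Prime := Fact.out
  obtain ⟨b, hb⟩ := prime_dvd_sum_sq_factorial_div hp3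
  have hfac : ¬ p ∣ (p - 1)! ^ 2 := fun h =>
    (Nat.Prime.dvd_factorial hp).not.2 (by omega) (hp.dvd_of_dvd_pow h)
  rw [sum_Icc_one_div_sq_eq, hb]
  have hp0 : (p : ℚ) ≠ 0 := by exact_mod_cast hp.ne_zero
  rw [Nat.cast_mul, mul_div_assoc, mul_div_cancel_left₀ _ hp0, div_eq_mul_inv]
  exact mul_mem (natCast_mem _ b)
    (by exact_mod_cast Rat.inv_natCast_mem_padicValuation_integer hfac)

lemma sum_reflect_mul_hypergeomCoeff_div_mem {x : ℚ} (hx : x ∈ (Rat.padicValuation p).integer) :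
    ∑ k ∈ Icc 1 (p - 1), (∑ i ∈ range k, ((((i + 1) * (p - 1 - i) : ℕ) : ℚ))⁻¹)
      * hypergeomCoeff x k / k ∈ (Rat.padicValuation p).integer := by
  refine sum_mem fun k hk => ?_
  obtain ⟨hk1, hkp⟩ := mem_Icc.1 hk
  rw [div_eq_mul_inv]
  refine mul_mem (mul_mem (sum_mem fun i hi => ?_)
    (hypergeomCoeff_mem_padicValuation_integer hx (by omega)))
    (Rat.inv_natCast_mem_padicValuation_integer (Nat.not_dvd_of_pos_of_lt hk1 (by omega)))
  have hik : i < k := mem_range.1 hi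
  refine Rat.inv_natCast_mem_padicValuation_integer fun h => ?_
  rcases ((Fact.out : p.Prime).dvd_mul).1 h with h | h
  · exact Nat.not_dvd_of_pos_of_lt i.succ_pos (by omega) h
  · exact Nat.not_dvd_of_pos_of_lt (by omega) (by omega) h

end Padic

theorem stmt_13 (p : ℕ) (hp : p.Prime) (hp3 : 3 < p) (r m : ℕ)
    (hr : 0 < r) (hrm : r < m) (hm : Nat.Coprime m p) :
    pcong p 1
      (∑ k ∈ Finset.Icc 1 (p - 1),
        (ascPochhammer ℚ k).eval ((r : ℚ) / m) *
            (ascPochhammer ℚ k).eval (1 - (r : ℚ) / m) /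
          ((ascPochhammer ℚ k).eval 1) ^ 2 * (1 / (k : ℚ)) *
          ∑ j ∈ Finset.range k, (1 / ((r : ℚ) / m + j) + 1 / (1 - (r : ℚ) / m + j)))
      (∑ k ∈ Finset.Icc 1 (p - 1),
        (ascPochhammer ℚ k).eval ((r : ℚ) / m) *
            (ascPochhammer ℚ k).eval (1 - (r : ℚ) / m) /
          ((ascPochhammer ℚ k).eval 1) ^ 2 *
          (2 * (∑ j ∈ Finset.Icc 1 k, (1 : ℚ) / j) / k)) := by
  have := Fact.mk hp
  set x : ℚ := r / m
  have hm0 : (0 : ℚ) < m := by exact_mod_cast hr.trans hrm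
  have hx0 : 0 < x := by positivity
  have hx1 : x < 1 := (div_lt_one hm0).2 (by exact_mod_cast hrm)
  have hx : ∀ n : ℕ, (x + n) * (1 - x + n) ≠ 0 := fun n => by
    have : 0 < 1 - x := by linarith
    positivity
  have hxO : x ∈ (Rat.padicValuation p).integer :=
    mul_mem (natCast_mem _ r)
      (Rat.inv_natCast_mem_padicValuation_integer ((Nat.Prime.coprime_iff_not_dvd hp).1 hm.symm))
  have hH : ∀ k : ℕ, ∑ j ∈ Icc 1 k, (1 : ℚ) / j = harmonic k := fun k => by
    simp [harmonic_eq_sum_Icc]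
  simp_rw [hH]
  change pcong p 1 (∑ k ∈ Icc 1 (p - 1), hypergeomCoeff x k * (1 / k) * recipSum x k)
    (∑ k ∈ Icc 1 (p - 1), hypergeomCoeff x k * (2 * harmonic k / k))
  apply pcong_one_of_sub_div_mem
  rw [sum_hypergeomCoeff_sub_two_harmonic hx, Nat.cast_pred hp.pos, sub_add_cancel, sub_div,
    mul_div_cancel_left₀ _ (by exact_mod_cast hp.ne_zero)]
  exact sub_mem (sum_Icc_one_div_sq_div_mem hp3) (sum_reflect_mul_hypergeomCoeff_div_mem hxO)
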